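/- arXiv:1811.04611 — 4 statements merged into one kernel-verified Lean document; each statement's English description precedes it below -/
import Mathlib

section
/- Let $(a_i)_{i \geq 0}$ be a sequence of non-negative real numbers, all but finitely many zero. Suppose there exist real numbers $\mu_0, \mu_1, \mu_2$, a real number $c \geq 0$, and a positive integer $m$ such that $\sum_{i \geq 0} a_i = \mu_0$, $\sum_{i \geq 0} i \cdot a_i = \mu_1 c$, $\sum_{i \geq 0} i(i-1) a_i \leq \mu_2 c$, and $2m\mu_1 > \mu_2$. Then $c \leq \frac{m(m+1)\mu_0}{2m\mu_1 - \mu_2}$. -/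
/-! For every integer `m`, the weight `(i - m)(i - m - 1)` is a product of consecutive integers and
hence non-negative, so `∑ (i - m)(i - m - 1) aᵢ ≥ 0`. Expanding,
`∑ i(i-1) aᵢ - 2m ∑ i aᵢ + m(m+1) ∑ aᵢ ≥ 0`, which under the hypotheses reads
`(2mμ₁ - μ₂) c ≤ m(m+1) μ₀`. -/

open Function

theorem Int.cast_mul_sub_one_nonneg (n : ℤ) : 0 ≤ (n : ℝ) * (n - 1) := by
  have h : (0 : ℤ) ≤ n * (n - 1) := by nlinarith [Int.le_self_sq n]
  exact_mod_cast h

theorem two_mul_tsum_natCast_mul_le {a : ℕ → ℝ} (ha : ∀ i, 0 ≤ a i) (h0 : Summable a)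
    (h1 : Summable fun i : ℕ => (i : ℝ) * a i)
    (h2 : Summable fun i : ℕ => (i : ℝ) * ((i : ℝ) - 1) * a i) (m : ℤ) :
    2 * m * ∑' i : ℕ, (i : ℝ) * a i ≤
      ∑' i : ℕ, (i : ℝ) * ((i : ℝ) - 1) * a i + m * (m + 1) * ∑' i : ℕ, a i := by
  have hsum := (h2.hasSum.sub (h1.hasSum.mul_left (2 * (m : ℝ)))).add
    (h0.hasSum.mul_left ((m : ℝ) * (m + 1)))
  have hnonneg := hsum.nonneg fun i => by
    have h := mul_nonneg (Int.cast_mul_sub_one_nonneg (i - m)) (ha i)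
    push_cast at h
    linarith
  linarith

theorem Function.HasFiniteSupport.summable_mul {ι R : Type*} [NonUnitalNonAssocSemiring R]
    [TopologicalSpace R] {a : ι → R} (ha : HasFiniteSupport a) (f : ι → R) :
    Summable fun i => f i * a i :=
  summable_of_hasFiniteSupport (Set.Finite.subset ha (support_mul_subset_right f a))

theorem stmt_0_general (a : ℕ → ℝ) (ha : ∀ i, 0 ≤ a i)
    (hfin : ∀ᶠ i in Filter.atTop, a i = 0)
    (μ0 μ1 μ2 c : ℝ) (m : ℕ)
    (h0 : ∑' i : ℕ, a i = μ0)
    (h1 : ∑' i : ℕ, (i : ℝ) * a i = μ1 * c)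
    (h2 : ∑' i : ℕ, (i : ℝ) * ((i : ℝ) - 1) * a i ≤ μ2 * c)
    (hden : 2 * (m : ℝ) * μ1 > μ2) :
    c ≤ (m : ℝ) * ((m : ℝ) + 1) * μ0 / (2 * (m : ℝ) * μ1 - μ2) := by
  have hsupp : HasFiniteSupport a := by
    rw [← Nat.cofinite_eq_atTop, Filter.eventually_cofinite] at hfin
    exact hfin
  have key := two_mul_tsum_natCast_mul_le ha (summable_of_hasFiniteSupport hsupp)
    (hsupp.summable_mul _) (hsupp.summable_mul _) m
  push_cast at key
  rw [h0, h1] at key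
  rw [le_div_iff₀ (sub_pos.2 hden)]
  linarith

/-- Lemma (technical auxiliary): if `∑ aᵢ = μ₀`, `∑ i·aᵢ = μ₁·c`,
`∑ i(i-1)·aᵢ ≤ μ₂·c` and `2mμ₁ > μ₂`, then `c ≤ m(m+1)μ₀ / (2mμ₁ - μ₂)`. -/
theorem stmt_0 (a : ℕ → ℝ) (ha : ∀ i, 0 ≤ a i)
    (hfin : ∀ᶠ i in Filter.atTop, a i = 0)
    (μ0 μ1 μ2 c : ℝ) (hc : 0 ≤ c) (m : ℕ) (hm : 0 < m)
    (h0 : ∑' i : ℕ, a i = μ0)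
    (h1 : ∑' i : ℕ, (i : ℝ) * a i = μ1 * c)
    (h2 : ∑' i : ℕ, (i : ℝ) * ((i : ℝ) - 1) * a i ≤ μ2 * c)
    (hden : 2 * (m : ℝ) * μ1 > μ2) :
    c ≤ (m : ℝ) * ((m : ℝ) + 1) * μ0 / (2 * (m : ℝ) * μ1 - μ2) :=
  stmt_0_general a ha hfin μ0 μ1 μ2 c m h0 h1 h2 hden
end

section
/- Let $q$ be a prime power, $n \geq 3$, and suppose $m$ is a positive integer with $2(q+1)m > \frac{q^{n-2}-1}{q-1}$. Then the maximum number $\mathcal{A}_q(n, n-2, n-3; 2)$ of $(n-2)$-dimensional subspaces of $\mathbb{F}_q^n$ such that every $(n-3)$-dimensional subspace is contained in at most $2$ of them satisfies $\mathcal{A}_q(n, n-2, n-3; 2) \leq \left\lfloor \frac{q^n - 1}{q - 1} \cdot \frac{m(m+1)}{2(q+1)m - \frac{q^{n-2}-1}{q-1}} \right\rfloor$. -/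
/-!
Double counting over hyperplanes. Write `[d]_q = 1 + q + ⋯ + q^(d-1)` and let `a_H` be the
number of members of `S` inside the hyperplane `H`. A member has codimension 2, so it lies in
exactly `q + 1` hyperplanes and `∑ a_H = (q + 1)|S|`. Two distinct members inside `H` span `H`
and meet in a subspace `T` of codimension 3, which is a hyperplane of the first member. Since
`T` lies in at most two members, the ordered pair (and then `H`) is recovered from the first
member and `T`, so `∑ a_H (a_H - 1) ≤ |S| [n-2]_q`. Summing `2ma ≤ a(a-1) + m(m+1)`, i.e.
`(a - m)(a - m - 1) ≥ 0`, over the `[n]_q` hyperplanes gives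
`2m(q+1)|S| ≤ |S| [n-2]_q + [n]_q m(m+1)`.
-/

/-- A `t-(n,k,λ)_q` subspace packing: a set of `k`-subspaces of `𝔽_q^n` such that
every `t`-subspace is contained in at most `λ` of them. -/
def IsSubspacePacking (F : Type*) [Field F] [Fintype F] (n k t lam : ℕ)
    (S : Finset (Submodule F (Fin n → F))) : Prop :=
  (∀ U ∈ S, Module.finrank F U = k) ∧
  ∀ T : Submodule F (Fin n → F), Module.finrank F T = t →
    Nat.card {U : Submodule F (Fin n → F) // U ∈ S ∧ T ≤ U} ≤ lam

open Module Finset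

namespace Submodule

instance finite_of_finite {R M : Type*} [Semiring R] [AddCommMonoid M] [Module R M] [Finite M] :
    Finite (Submodule R M) :=
  Finite.of_injective _ SetLike.coe_injective

variable {K V : Type*} [Field K] [AddCommGroup V] [Module K V]

section FiniteDimensional

variable [FiniteDimensional K V]

theorem finrank_map_mkQ_add_finrank {U H : Submodule K V} (h : U ≤ H) :
    finrank K (H.map U.mkQ) + finrank K U = finrank K H := by
  have := (quotientQuotientEquivQuotient U H h).finrank_eq
  have := (H.map U.mkQ).finrank_quotient_add_finrank
  have := U.finrank_quotient_add_finrank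
  have := H.finrank_quotient_add_finrank
  omega

theorem sup_eq_of_ne_of_finrank_add_one {U U' H : Submodule K V} (hne : U ≠ U') (hU : U ≤ H)
    (hU' : U' ≤ H) (hrank : finrank K U' = finrank K U) (hH : finrank K U + 1 = finrank K H) :
    U ⊔ U' = H := by
  have hlt : U < U ⊔ U' := lt_of_le_of_ne le_sup_left fun h =>
    hne (eq_of_le_of_finrank_eq (le_sup_right.trans h.ge) hrank).symm
  have := finrank_lt_finrank_of_lt hlt
  exact eq_of_le_of_finrank_le (sup_le hU hU') (by omega)

theorem finrank_inf_add_one_of_ne {U U' H : Submodule K V} (hne : U ≠ U') (hU : U ≤ H)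
    (hU' : U' ≤ H) (hrank : finrank K U' = finrank K U) (hH : finrank K U + 1 = finrank K H) :
    finrank K ↥(U ⊓ U') + 1 = finrank K U := by
  have := finrank_sup_add_finrank_inf_eq U U'
  rw [sup_eq_of_ne_of_finrank_add_one hne hU hU' hrank hH] at this
  omega

variable [Finite K]

omit [FiniteDimensional K V] in
theorem card_finrank_eq_one :
    Nat.card {L : Submodule K V // finrank K L = 1} =
      ∑ i ∈ range (finrank K V), Nat.card K ^ i := by
  rw [← Nat.card_congr (Projectivization.equivSubmodule K V),
    Projectivization.card_of_finrank K V rfl]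

theorem card_hyperplanes :
    Nat.card {H : Submodule K V // finrank K H + 1 = finrank K V} =
      ∑ i ∈ range (finrank K V), Nat.card K ^ i := by
  rw [← Subspace.dual_finrank_eq, ← card_finrank_eq_one]
  refine Nat.card_congr (Subspace.orderIsoFiniteDimensional.toEquiv.subtypeEquiv fun H => ?_)
  have := Subspace.finrank_add_finrank_dualAnnihilator_eq H
  change _ ↔ finrank K H.dualAnnihilator = 1
  rw [Subspace.dual_finrank_eq]
  omega

theorem card_hyperplanes_ge (U : Submodule K V) :
    Nat.card {H : Submodule K V // U ≤ H ∧ finrank K H + 1 = finrank K V} =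
      ∑ i ∈ range (finrank K V - finrank K U), Nat.card K ^ i := by
  have := U.finrank_quotient_add_finrank
  rw [show finrank K V - finrank K U = finrank K (V ⧸ U) by omega, ← card_hyperplanes]
  refine Nat.card_congr ((Equiv.subtypeSubtypeEquivSubtypeInter (· ∈ Set.Ici U) _).symm.trans
    ((comapMkQRelIso U).symm.toEquiv.subtypeEquiv fun H => ?_))
  change _ ↔ finrank K (H.1.map U.mkQ) + 1 = _
  have := finrank_map_mkQ_add_finrank H.2
  omega

theorem card_hyperplanes_le (U : Submodule K V) :
    Nat.card {T : Submodule K V // T ≤ U ∧ finrank K T + 1 = finrank K U} =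
      ∑ i ∈ range (finrank K U), Nat.card K ^ i := by
  rw [← card_hyperplanes]
  refine (Nat.card_congr (((MapSubtype.orderIso U).toEquiv.subtypeEquiv fun T => ?_).trans
    (Equiv.subtypeSubtypeEquivSubtypeInter (· ≤ U) _))).symm
  change _ ↔ finrank K (T.map U.subtype) + 1 = _
  rw [finrank_map_subtype_eq]

end FiniteDimensional

section Finite

variable [Finite V]

noncomputable def hyperplanes (W : Submodule K V) : Finset (Submodule K V) :=
  (Set.toFinite {H | H ≤ W ∧ finrank K H + 1 = finrank K W}).toFinset

@[simp]
theorem mem_hyperplanes {W H : Submodule K V} :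
    H ∈ W.hyperplanes ↔ H ≤ W ∧ finrank K H + 1 = finrank K W :=
  Set.Finite.mem_toFinset _

variable [Finite K]

theorem card_hyperplanes_eq (W : Submodule K V) :
    #W.hyperplanes = ∑ i ∈ range (finrank K W), Nat.card K ^ i := by
  rw [← card_hyperplanes_le, ← Nat.card_eq_finsetCard]
  exact Nat.card_congr (Equiv.subtypeEquivRight fun _ => mem_hyperplanes)

open scoped Classical in
theorem card_filter_hyperplanes_top_ge (U : Submodule K V) :
    #{H ∈ (⊤ : Submodule K V).hyperplanes | U ≤ H} =
      ∑ i ∈ range (finrank K V - finrank K U), Nat.card K ^ i := by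
  rw [← card_hyperplanes_ge, ← Nat.card_eq_finsetCard]
  exact Nat.card_congr (Equiv.subtypeEquivRight fun _ => by simp [and_comm])

end Finite

end Submodule

theorem two_mul_mul_add_le (a m : ℕ) : 2 * m * a + a ≤ a * a + m * (m + 1) := by
  have : 0 ≤ ((a : ℤ) - m) * ((a : ℤ) - m - 1) := by
    rcases le_or_gt (a : ℤ) m with h | h <;> nlinarith
  zify
  nlinarith

section Packing

open Submodule
open scoped Classical

variable {K V : Type*} [Field K] [AddCommGroup V] [Module K V] {S : Finset (Submodule K V)}

theorem eq_of_inf_eq_inf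
    (hS : ∀ T : Submodule K V, finrank K T + 3 = finrank K V → #{U ∈ S | T ≤ U} ≤ 2)
    {U U₁ U₂ : Submodule K V} (hU : U ∈ S) (hU₁ : U₁ ∈ S) (hU₂ : U₂ ∈ S) (h₁ : U ≠ U₁)
    (h₂ : U ≠ U₂) (hT : finrank K ↥(U ⊓ U₁) + 3 = finrank K V) (h : U ⊓ U₁ = U ⊓ U₂) :
    U₁ = U₂ := by
  by_contra h₁₂
  have hsub : {U, U₁, U₂} ⊆ {W ∈ S | U ⊓ U₁ ≤ W} := by
    intro W hW
    simp only [mem_insert, mem_singleton] at hW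
    rcases hW with rfl | rfl | rfl
    · exact mem_filter.2 ⟨hU, inf_le_left⟩
    · exact mem_filter.2 ⟨hU₁, inf_le_right⟩
    · exact mem_filter.2 ⟨hU₂, h.le.trans inf_le_right⟩
  have := card_le_card hsub
  rw [card_eq_three.2 ⟨U, U₁, U₂, h₁, h₂, h₁₂, rfl⟩] at this
  have := hS _ hT
  omega

variable [Finite V]

theorem sum_card_offDiag_le (hS₁ : ∀ U ∈ S, finrank K U + 2 = finrank K V)
    (hS₂ : ∀ T : Submodule K V, finrank K T + 3 = finrank K V → #{U ∈ S | T ≤ U} ≤ 2) :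
    ∑ H ∈ (⊤ : Submodule K V).hyperplanes, #{U ∈ S | U ≤ H}.offDiag ≤
      ∑ U ∈ S, #U.hyperplanes := by
  rw [← card_sigma, ← card_sigma]
  refine card_le_card_of_injOn (fun x => ⟨x.2.1, x.2.1 ⊓ x.2.2⟩) ?_ ?_
  · rintro ⟨H, U, U'⟩ hx
    simp only [coe_sigma, Set.mem_sigma_iff, mem_coe, mem_offDiag, mem_filter,
      mem_hyperplanes] at hx ⊢
    obtain ⟨⟨-, hH⟩, ⟨hU, hUH⟩, ⟨hU', hU'H⟩, hne⟩ := hx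
    rw [finrank_top] at hH
    have := hS₁ U hU
    have := hS₁ U' hU'
    exact ⟨hU, inf_le_left, finrank_inf_add_one_of_ne hne hUH hU'H (by omega) (by omega)⟩
  · rintro ⟨H₁, U, U₁⟩ hx ⟨H₂, U', U₂⟩ hy hxy
    simp only [coe_sigma, Set.mem_sigma_iff, mem_coe, mem_offDiag, mem_filter,
      mem_hyperplanes] at hx hy
    simp only [Sigma.mk.injEq] at hxy
    obtain ⟨rfl, hinf⟩ := hxy
    obtain ⟨⟨-, hH₁⟩, ⟨hU, hUH₁⟩, ⟨hU₁, hU₁H₁⟩, hne₁⟩ := hx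
    obtain ⟨⟨-, hH₂⟩, ⟨-, hUH₂⟩, ⟨hU₂, hU₂H₂⟩, hne₂⟩ := hy
    rw [finrank_top] at hH₁ hH₂
    have := hS₁ U hU
    have := hS₁ U₁ hU₁
    have := hS₁ U₂ hU₂
    have hT := finrank_inf_add_one_of_ne hne₁ hUH₁ hU₁H₁ (by omega) (by omega)
    obtain rfl : U₁ = U₂ := eq_of_inf_eq_inf hS₂ hU hU₁ hU₂ hne₁ hne₂ (by omega) (eq_of_heq hinf)
    rw [← sup_eq_of_ne_of_finrank_add_one hne₁ hUH₁ hU₁H₁ (by omega) (by omega),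
      sup_eq_of_ne_of_finrank_add_one hne₂ hUH₂ hU₂H₂ (by omega) (by omega)]

variable [Finite K]

theorem sum_card_filter_le_hyperplanes (hS : ∀ U ∈ S, finrank K U + 2 = finrank K V) :
    ∑ H ∈ (⊤ : Submodule K V).hyperplanes, #{U ∈ S | U ≤ H} = (Nat.card K + 1) * #S := by
  calc ∑ H ∈ (⊤ : Submodule K V).hyperplanes, #{U ∈ S | U ≤ H}
      = ∑ U ∈ S, #{H ∈ (⊤ : Submodule K V).hyperplanes | U ≤ H} :=
        (sum_card_bipartiteAbove_eq_sum_card_bipartiteBelow _).symm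
    _ = ∑ _U ∈ S, (Nat.card K + 1) := sum_congr rfl fun U hU => by
        rw [card_filter_hyperplanes_top_ge, show finrank K V - finrank K U = 2 by grind]
        simp
    _ = (Nat.card K + 1) * #S := by rw [sum_const, smul_eq_mul, mul_comm]

theorem two_mul_mul_card_le (hS₁ : ∀ U ∈ S, finrank K U + 2 = finrank K V)
    (hS₂ : ∀ T : Submodule K V, finrank K T + 3 = finrank K V → #{U ∈ S | T ≤ U} ≤ 2) (m : ℕ) :
    2 * m * ((Nat.card K + 1) * #S) ≤
      #S * ∑ i ∈ range (finrank K V - 2), Nat.card K ^ i +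
        (∑ i ∈ range (finrank K V), Nat.card K ^ i) * (m * (m + 1)) := by
  set a : Submodule K V → ℕ := fun H => #{U ∈ S | U ≤ H}
  have hpairs : ∑ H ∈ (⊤ : Submodule K V).hyperplanes, (a H * a H - a H) ≤
      #S * ∑ i ∈ range (finrank K V - 2), Nat.card K ^ i := by
    simp_rw [a, ← offDiag_card]
    refine (sum_card_offDiag_le hS₁ hS₂).trans_eq ?_
    rw [sum_congr rfl fun U hU => by
      rw [card_hyperplanes_eq, show finrank K U = finrank K V - 2 by grind], sum_const,
      smul_eq_mul]
  have hcount : 2 * m * ((Nat.card K + 1) * #S) + (Nat.card K + 1) * #S ≤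
      #S * ∑ i ∈ range (finrank K V - 2), Nat.card K ^ i + (Nat.card K + 1) * #S +
        (∑ i ∈ range (finrank K V), Nat.card K ^ i) * (m * (m + 1)) :=
    calc 2 * m * ((Nat.card K + 1) * #S) + (Nat.card K + 1) * #S
        = ∑ H ∈ (⊤ : Submodule K V).hyperplanes, (2 * m * a H + a H) := by
          rw [sum_add_distrib, ← mul_sum, sum_card_filter_le_hyperplanes hS₁]
      _ ≤ ∑ H ∈ (⊤ : Submodule K V).hyperplanes, ((a H * a H - a H) + a H + m * (m + 1)) :=
          sum_le_sum fun H _ => by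
            rw [Nat.sub_add_cancel (Nat.le_mul_self _)]
            exact two_mul_mul_add_le _ _
      _ = ∑ H ∈ (⊤ : Submodule K V).hyperplanes, (a H * a H - a H) +
            ∑ H ∈ (⊤ : Submodule K V).hyperplanes, a H +
              #(⊤ : Submodule K V).hyperplanes * (m * (m + 1)) := by
          rw [sum_add_distrib, sum_add_distrib, sum_const, smul_eq_mul]
      _ ≤ _ := by
          rw [sum_card_filter_le_hyperplanes hS₁, card_hyperplanes_eq, finrank_top]
          gcongr
  omega

end Packing

theorem stmt_3_general (F : Type*) [Field F] [Fintype F] (q : ℕ) (hq : Fintype.card F = q)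
    (n m : ℕ) (hn : 3 ≤ n)
    (hineq : ((q : ℝ) ^ (n - 2) - 1) / ((q : ℝ) - 1) < 2 * ((q : ℝ) + 1) * m)
    (S : Finset (Submodule F (Fin n → F)))
    (hS : IsSubspacePacking F n (n - 2) (n - 3) 2 S) :
    S.card ≤ ⌊((q : ℝ) ^ n - 1) / ((q : ℝ) - 1) *
      ((m : ℝ) * ((m : ℝ) + 1) /
        (2 * ((q : ℝ) + 1) * m - ((q : ℝ) ^ (n - 2) - 1) / ((q : ℝ) - 1)))⌋₊ := by
  classical
  have hcount := two_mul_mul_card_le (K := F) (S := S)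
    (fun U hU => by rw [hS.1 U hU, finrank_fin_fun]; omega)
    (fun T hT => by
      rw [← Nat.card_eq_finsetCard, Nat.card_congr (Equiv.subtypeEquivRight fun _ => mem_filter)]
      exact hS.2 T (by rw [finrank_fin_fun] at hT; omega)) m
  rw [finrank_fin_fun, Nat.card_eq_fintype_card, hq] at hcount
  have hq1 : (q : ℝ) ≠ 1 := by
    have := hq ▸ Fintype.one_lt_card (α := F)
    exact_mod_cast this.ne'
  have hgeom (d : ℕ) :
      ((∑ i ∈ range d, q ^ i : ℕ) : ℝ) = ((q : ℝ) ^ d - 1) / ((q : ℝ) - 1) := by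
    push_cast
    exact geom_sum_eq hq1 d
  refine Nat.le_floor ?_
  rw [← mul_div_assoc, le_div_iff₀ (sub_pos.2 hineq), ← hgeom, ← hgeom]
  have := (Nat.cast_le (α := ℝ)).2 hcount
  push_cast at this ⊢
  linarith

/-- Proposition: if `2(q+1)m > (q^{n-2}-1)/(q-1)` and `n ≥ 3`, then
`𝒜_q(n, n-2, n-3; 2) ≤ ⌊ (q^n-1)/(q-1) · m(m+1) / (2(q+1)m - (q^{n-2}-1)/(q-1)) ⌋`. -/
theorem stmt_3 (F : Type*) [Field F] [Fintype F] (q : ℕ) (hq : Fintype.card F = q)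
    (n m : ℕ) (hn : 3 ≤ n) (hm : 0 < m)
    (hineq : ((q : ℝ) ^ (n - 2) - 1) / ((q : ℝ) - 1) < 2 * ((q : ℝ) + 1) * m)
    (S : Finset (Submodule F (Fin n → F)))
    (hS : IsSubspacePacking F n (n - 2) (n - 3) 2 S) :
    S.card ≤ ⌊((q : ℝ) ^ n - 1) / ((q : ℝ) - 1) *
      ((m : ℝ) * ((m : ℝ) + 1) /
        (2 * ((q : ℝ) + 1) * m - ((q : ℝ) ^ (n - 2) - 1) / ((q : ℝ) - 1)))⌋₊ :=
  stmt_3_general F q hq n m hn hineq S hS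
end

section
/- Let $q$ be a prime power, $k \geq 2$, and let $\mathcal{P}$ be a non-empty multiset of 1-dimensional subspaces of $\mathbb{F}_q^n$ obtained as the union (with multiplicity) of the sets of 1-dimensional subspaces of a non-empty multiset of subspaces of $\mathbb{F}_q^n$, each of dimension at least $k$. Then for every hyperplane $\mathcal{H}$ (i.e., $(n-1)$-dimensional subspace) of $\mathbb{F}_q^n$, $|\mathcal{P}| \equiv |\mathcal{P} \cap \mathcal{H}| \pmod{q^{k-1}}$. -/
/-!
A subspace of dimension `d` over `𝔽_q` has `1 + q + ⋯ + q^(d-1)` one-dimensional subspaces, and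
this count modulo `q^m` depends only on `d ≥ m`. Meeting a hyperplane lowers the dimension of a
subspace by at most one, so a subspace `U` of dimension at least `k` and its trace `U ∩ ℋ` have
congruent line counts modulo `q^(k-1)`; summing over the multiset gives the claim.
-/

open Module Finset
open scoped LinearAlgebra.Projectivization

theorem Nat.geom_sum_range_modEq_of_le (q : ℕ) {m d d' : ℕ} (hd : m ≤ d) (hd' : m ≤ d') :
    ∑ i ∈ range d, q ^ i ≡ ∑ i ∈ range d', q ^ i [MOD q ^ m] := by
  suffices key : ∀ d, m ≤ d → ∑ i ∈ range d, q ^ i ≡ ∑ i ∈ range m, q ^ i [MOD q ^ m] from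
    (key d hd).trans (key d' hd').symm
  intro d hd
  rw [← sum_range_add_sum_Ico _ hd]
  have htail : q ^ m ∣ ∑ i ∈ Ico m d, q ^ i :=
    dvd_sum fun i hi => pow_dvd_pow q (mem_Ico.1 hi).1
  simpa using (Nat.modEq_zero_iff_dvd.2 htail).add_left (∑ i ∈ range m, q ^ i)

namespace Submodule

variable {F V : Type*} [Field F] [AddCommGroup V] [Module F V]

noncomputable def linesLeEquivProjectivization (U : Submodule F V) :
    {W : Submodule F V // finrank F W = 1 ∧ W ≤ U} ≃ ℙ F U :=
  Equiv.trans
    { toFun := fun W => ⟨W.1.comap U.subtype, by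
        rw [← finrank_map_subtype_eq, map_comap_subtype, inf_eq_right.2 W.2.2, W.2.1]⟩
      invFun := fun W => ⟨W.1.map U.subtype, (finrank_map_subtype_eq U W.1).trans W.2,
        map_subtype_le U _⟩
      left_inv := fun W =>
        Subtype.ext ((map_comap_subtype U W.1).trans (inf_eq_right.2 W.2.2))
      right_inv := fun W => Subtype.ext (comap_map_eq_of_injective U.injective_subtype W.1) }
    (Projectivization.equivSubmodule F U).symm

theorem natCard_lines_le [Finite F] (U : Submodule F V) :
    Nat.card {W : Submodule F V // finrank F W = 1 ∧ W ≤ U} =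
      ∑ i ∈ range (finrank F U), Nat.card F ^ i := by
  rw [Nat.card_congr (linesLeEquivProjectivization U), Projectivization.card_of_finrank F U rfl]

theorem finrank_le_finrank_inf_add_one [FiniteDimensional F V] (U : Submodule F V)
    {H : Submodule F V} (hH : finrank F V ≤ finrank F H + 1) :
    finrank F U ≤ finrank F ↥(U ⊓ H) + 1 := by
  have hsum := finrank_sup_add_finrank_inf_eq U H
  have hsup := finrank_le (U ⊔ H)
  omega

theorem natCard_lines_le_modEq_inf [Finite F] [FiniteDimensional F V] {k : ℕ}
    {U : Submodule F V} (hU : k ≤ finrank F U) {H : Submodule F V}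
    (hH : finrank F V ≤ finrank F H + 1) :
    Nat.card {W : Submodule F V // finrank F W = 1 ∧ W ≤ U} ≡
      Nat.card {W : Submodule F V // finrank F W = 1 ∧ W ≤ U ⊓ H} [MOD Nat.card F ^ (k - 1)] := by
  have hdrop := finrank_le_finrank_inf_add_one U hH
  rw [natCard_lines_le, natCard_lines_le]
  exact Nat.geom_sum_range_modEq_of_le _ (by omega) (by omega)

end Submodule

theorem stmt_5_general (F : Type*) [Field F] [Fintype F] (q : ℕ) (hq : Fintype.card F = q)
    (n k : ℕ)
    (M : Multiset (Submodule F (Fin n → F)))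
    (hdim : ∀ U ∈ M, k ≤ finrank F U)
    (H : Submodule F (Fin n → F)) (hH : finrank F H = n - 1) :
    (M.map (fun U => Nat.card
        {W : Submodule F (Fin n → F) // finrank F W = 1 ∧ W ≤ U})).sum ≡
    (M.map (fun U => Nat.card
        {W : Submodule F (Fin n → F) // finrank F W = 1 ∧ W ≤ U ∧ W ≤ H})).sum
      [MOD q ^ (k - 1)] := by
  have hhyperplane : finrank F (Fin n → F) ≤ finrank F H + 1 := by
    rw [finrank_fin_fun, hH]; omega
  simp_rw [← le_inf_iff, ← hq, ← Nat.card_eq_fintype_card]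
  exact Nat.ModEq.multisetSum_map fun U hU => Submodule.natCard_lines_le_modEq_inf (hdim U hU)
    hhyperplane

/-- Lemma: let `𝒫` be the multiset of `1`-subspaces generated (with multiplicity)
from a non-empty multiset of subspaces of `𝔽_q^n`, each of dimension at least `k ≥ 2`.
Then for every hyperplane `ℋ`, `|𝒫| ≡ |𝒫 ∩ ℋ| (mod q^{k-1})`. -/
theorem stmt_5 (F : Type*) [Field F] [Fintype F] (q : ℕ) (hq : Fintype.card F = q)
    (n k : ℕ) (hk : 2 ≤ k)
    (M : Multiset (Submodule F (Fin n → F))) (hM : M ≠ 0)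
    (hdim : ∀ U ∈ M, k ≤ finrank F U)
    (H : Submodule F (Fin n → F)) (hH : finrank F H = n - 1) (hHtop : H ≠ ⊤) :
    (M.map (fun U => Nat.card
        {W : Submodule F (Fin n → F) // finrank F W = 1 ∧ W ≤ U})).sum ≡
    (M.map (fun U => Nat.card
        {W : Submodule F (Fin n → F) // finrank F W = 1 ∧ W ≤ U ∧ W ≤ H})).sum
      [MOD q ^ (k - 1)] :=
  stmt_5_general F q hq n k M hdim H hH
end

section
/- Let $U = \operatorname{rowspace}(I_k \mid M_1)$ and $V = \operatorname{rowspace}(I_k \mid M_2)$ be the lifted subspaces of $k \times (n-k)$ matrices $M_1, M_2$ over $\mathbb{F}_q$. Then the subspace distance satisfies $d_S(U, V) = 2\operatorname{rank}(M_1 - M_2)$. -/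
/-!
The lifting of `M` is the graph of `x ↦ x M` over the first `k` coordinates, so it has
dimension `k`, and two liftings meet in the image of the kernel of `x ↦ x (M₁ - M₂)`,
which has dimension `k - rank (M₁ - M₂)` by rank–nullity.
-/

open Module Matrix

namespace Matrix

variable {R ι κ : Type*} [Fintype ι]

theorem finrank_range_vecMulLinear [Field R] [Fintype κ] (A : Matrix ι κ R) :
    finrank R (LinearMap.range A.vecMulLinear) = A.rank := by
  rw [range_vecMulLinear, rank_eq_finrank_span_row]

variable [DecidableEq ι]

def lifting [CommSemiring R] (M : Matrix ι κ R) : Submodule R (ι ⊕ κ → R) :=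
  Submodule.span R (Set.range (fromCols 1 M))

section CommSemiring

variable [CommSemiring R]

theorem lifting_eq_range_vecMulLinear (M : Matrix ι κ R) :
    lifting M = LinearMap.range (fromCols 1 M).vecMulLinear :=
  (range_vecMulLinear _).symm

theorem vecMulLinear_fromCols_one_injective (M : Matrix ι κ R) :
    Function.Injective (fromCols (1 : Matrix ι ι R) M).vecMulLinear := fun x y hxy => by
  simpa using congrArg (· ∘ Sum.inl) hxy

theorem mem_lifting_iff {M : Matrix ι κ R} {w : ι ⊕ κ → R} :
    w ∈ lifting M ↔ (w ∘ Sum.inl) ᵥ* M = w ∘ Sum.inr := by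
  rw [lifting_eq_range_vecMulLinear]
  constructor
  · rintro ⟨x, rfl⟩
    ext j
    simp
  · intro hw
    refine ⟨w ∘ Sum.inl, ?_⟩
    ext (i | j)
    · simp
    · simp [hw]

theorem finrank_lifting [StrongRankCondition R] (M : Matrix ι κ R) :
    finrank R (lifting M) = Fintype.card ι := by
  rw [lifting_eq_range_vecMulLinear,
    LinearMap.finrank_range_of_inj (vecMulLinear_fromCols_one_injective M),
    finrank_fintype_fun_eq_card]

end CommSemiring

section CommRing

variable [CommRing R]

theorem lifting_inf_lifting (M₁ M₂ : Matrix ι κ R) :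
    lifting M₁ ⊓ lifting M₂ =
      (LinearMap.ker (M₁ - M₂).vecMulLinear).map (fromCols 1 M₁).vecMulLinear := by
  ext w
  simp only [Submodule.mem_inf, mem_lifting_iff, Submodule.mem_map, LinearMap.mem_ker,
    vecMulLinear_apply, vecMul_sub, sub_eq_zero]
  constructor
  · rintro ⟨h₁, h₂⟩
    refine ⟨w ∘ Sum.inl, h₁.trans h₂.symm, ?_⟩
    ext (i | j)
    · simp
    · simp [h₁]
  · rintro ⟨x, hx, rfl⟩
    simp [hx]

end CommRing

section Field

variable [Field R] [Fintype κ]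

theorem finrank_lifting_inf_lifting_add_rank (M₁ M₂ : Matrix ι κ R) :
    finrank R ↥(lifting M₁ ⊓ lifting M₂) + (M₁ - M₂).rank = Fintype.card ι := by
  rw [lifting_inf_lifting, ← (Submodule.equivMapOfInjective _
      (vecMulLinear_fromCols_one_injective M₁) _).finrank_eq, ← finrank_range_vecMulLinear,
    add_comm, LinearMap.finrank_range_add_finrank_ker, finrank_fintype_fun_eq_card]

end Field

end Matrix

theorem stmt_10_general (F : Type*) [Field F] (k m : ℕ)
    (M1 M2 : Matrix (Fin k) (Fin m) F)
    (U V : Submodule F ((Fin k ⊕ Fin m) → F))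
    (hU : U = Submodule.span F (Set.range (Matrix.fromCols (1 : Matrix (Fin k) (Fin k) F) M1)))
    (hV : V = Submodule.span F (Set.range (Matrix.fromCols (1 : Matrix (Fin k) (Fin k) F) M2))) :
    finrank F ↥U + finrank F ↥V - 2 * finrank F ↥(U ⊓ V) = 2 * (M1 - M2).rank := by
  obtain rfl : U = lifting M1 := hU
  obtain rfl : V = lifting M2 := hV
  have hinf := finrank_lifting_inf_lifting_add_rank M1 M2
  rw [Fintype.card_fin] at hinf
  rw [finrank_lifting, finrank_lifting, Fintype.card_fin]
  omega

/-- If `U = rowspace (I_k | M₁)` and `V = rowspace (I_k | M₂)` are the liftings of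
`k × (n-k)` matrices `M₁, M₂`, then `d_S(U,V) = 2 · rank (M₁ - M₂)`. -/
theorem stmt_10 (F : Type*) [Field F] [Fintype F] (k m : ℕ)
    (M1 M2 : Matrix (Fin k) (Fin m) F)
    (U V : Submodule F ((Fin k ⊕ Fin m) → F))
    (hU : U = Submodule.span F (Set.range (Matrix.fromCols (1 : Matrix (Fin k) (Fin k) F) M1)))
    (hV : V = Submodule.span F (Set.range (Matrix.fromCols (1 : Matrix (Fin k) (Fin k) F) M2))) :
    finrank F ↥U + finrank F ↥V - 2 * finrank F ↥(U ⊓ V) = 2 * (M1 - M2).rank :=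
  stmt_10_general F k m M1 M2 U V hU hV
end
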